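/- If a structured switched linear system is structurally controllable, then the concatenated structured pattern [A_1, A_2, …, A_m, B_1, B_2, …, B_m] has generic rank n. -/

import Mathlib

/-- A realization of the structured pattern `(PA, PB)` of a switched linear system:
each matrix vanishes at every fixed-zero (non-free-parameter) position. -/
def IsRealization {m n r : ℕ}
    (PA : Fin m → Fin n → Fin n → Prop) (PB : Fin m → Fin n → Fin r → Prop)
    (A : Fin m → Matrix (Fin n) (Fin n) ℝ) (B : Fin m → Matrix (Fin n) (Fin r) ℝ) : Prop :=
  (∀ i k l, ¬ PA i k l → A i k l = 0) ∧ (∀ i k j, ¬ PB i k j → B i k j = 0)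

/-- The switched controllable subspace `⟨A_1,…,A_m | B_1,…,B_m⟩`: the smallest subspace of
`ℝ^n` containing the columns of every `B i` and invariant under every `A i`. -/
noncomputable def switchedCtrb {m n r : ℕ} (A : Fin m → Matrix (Fin n) (Fin n) ℝ)
    (B : Fin m → Matrix (Fin n) (Fin r) ℝ) : Submodule ℝ (Fin n → ℝ) :=
  sInf {W : Submodule ℝ (Fin n → ℝ) |
    (∀ i j, (fun k => B i k j) ∈ W) ∧ ∀ i, ∀ x ∈ W, (A i).mulVec x ∈ W}

/-- Structural controllability of the structured switched linear system. -/
def StructurallyControllable {m n r : ℕ}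
    (PA : Fin m → Fin n → Fin n → Prop) (PB : Fin m → Fin n → Fin r → Prop) : Prop :=
  ∃ A B, IsRealization PA PB A B ∧ switchedCtrb A B = ⊤

/-- The concatenated structured pattern `[A_1,…,A_m,B_1,…,B_m]`: an `n × m(n+r)` pattern
whose columns are all the columns of the `A_i` followed by all the columns of the `B_i`,
columns from different subsystems counted as distinct. -/
def concatPattern {m n r : ℕ}
    (PA : Fin m → Fin n → Fin n → Prop) (PB : Fin m → Fin n → Fin r → Prop)
    (k : Fin n) : (Fin m × Fin n) ⊕ (Fin m × Fin r) → Prop :=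
  fun c => match c with
  | Sum.inl (i, l) => PA i k l
  | Sum.inr (i, j) => PB i k j

/-- The generic rank of a structured pattern: the maximal rank achieved by a realization,
i.e. by a real matrix vanishing at every fixed-zero position. -/
noncomputable def gRank {n : ℕ} {α : Type} [Fintype α] (P : Fin n → α → Prop) : ℕ :=
  sSup {t : ℕ | ∃ M : Matrix (Fin n) α ℝ, (∀ k c, ¬ P k c → M k c = 0) ∧ M.rank = t}

/-!
The column space of `[A_1,…,A_m,B_1,…,B_m]` contains the columns of every `B_i`, and since it
contains the columns of every `A_i` it is invariant under every `A_i`. Hence it contains the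
switched controllable subspace, so a controllable realization yields a realization of the
concatenated pattern of rank `n`, the largest rank an `n`-row matrix can have.
-/

open Matrix

section SwitchedSystem

variable {m n r : ℕ} {A : Fin m → Matrix (Fin n) (Fin n) ℝ} {B : Fin m → Matrix (Fin n) (Fin r) ℝ}

theorem switchedCtrb_le {W : Submodule ℝ (Fin n → ℝ)} (hB : ∀ i j, (fun k => B i k j) ∈ W)
    (hA : ∀ i, ∀ x ∈ W, A i *ᵥ x ∈ W) : switchedCtrb A B ≤ W :=
  sInf_le ⟨hB, hA⟩

variable (A B) in
def concatMatrix : Matrix (Fin n) ((Fin m × Fin n) ⊕ (Fin m × Fin r)) ℝ :=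
  Matrix.of fun k => Sum.elim (fun c => A c.1 k c.2) (fun c => B c.1 k c.2)

theorem IsRealization.concatMatrix_eq_zero {PA : Fin m → Fin n → Fin n → Prop}
    {PB : Fin m → Fin n → Fin r → Prop} (h : IsRealization PA PB A B) :
    ∀ k c, ¬ concatPattern PA PB k c → concatMatrix A B k c = 0
  | k, .inl (i, l), hc => h.1 i k l hc
  | k, .inr (i, j), hc => h.2 i k j hc

theorem switchedCtrb_le_span_cols_concatMatrix :
    switchedCtrb A B ≤ Submodule.span ℝ (Set.range (concatMatrix A B).col) := by
  refine switchedCtrb_le (fun i j => Submodule.subset_span ⟨.inr (i, j), rfl⟩) fun i x _ => ?_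
  have hcols : Submodule.span ℝ (Set.range (A i).col) ≤
      Submodule.span ℝ (Set.range (concatMatrix A B).col) :=
    Submodule.span_mono (Set.range_subset_iff.2 fun l => ⟨.inl (i, l), rfl⟩)
  rw [← Matrix.range_mulVecLin] at hcols
  exact hcols ⟨x, rfl⟩

theorem rank_concatMatrix_of_switchedCtrb_eq_top (h : switchedCtrb A B = ⊤) :
    (concatMatrix A B).rank = n := by
  have htop : Submodule.span ℝ (Set.range (concatMatrix A B).col) = ⊤ :=
    top_le_iff.1 (h ▸ switchedCtrb_le_span_cols_concatMatrix)
  rw [rank_eq_finrank_span_cols, htop, finrank_top, Module.finrank_fin_fun]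

end SwitchedSystem

theorem gRank_eq_of_rank_eq {n : ℕ} {α : Type} [Fintype α] {P : Fin n → α → Prop}
    {M : Matrix (Fin n) α ℝ} (hM : ∀ k c, ¬ P k c → M k c = 0) (hrank : M.rank = n) :
    gRank P = n := by
  have hle : ∀ t ∈ {t : ℕ | ∃ M : Matrix (Fin n) α ℝ, (∀ k c, ¬ P k c → M k c = 0) ∧ M.rank = t},
      t ≤ n := by
    rintro t ⟨N, -, rfl⟩
    simpa using N.rank_le_card_height
  exact le_antisymm (csSup_le ⟨n, M, hM, hrank⟩ hle) (le_csSup ⟨n, hle⟩ ⟨M, hM, hrank⟩)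

/-- If a structured switched linear system is structurally controllable,
then the concatenated structured pattern `[A_1,…,A_m,B_1,…,B_m]` has generic rank `n`. -/
theorem gRank_concatPattern_of_structurallyControllable
    {m n r : ℕ} (PA : Fin m → Fin n → Fin n → Prop) (PB : Fin m → Fin n → Fin r → Prop)
    (h : StructurallyControllable PA PB) :
    gRank (concatPattern PA PB) = n := by
  obtain ⟨A, B, hreal, hctrb⟩ := h
  exact gRank_eq_of_rank_eq hreal.concatMatrix_eq_zero
    (rank_concatMatrix_of_switchedCtrb_eq_top hctrb)
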